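/- arXiv:2004.05944 — 2 statements merged into one kernel-verified Lean document; each statement's English description precedes it below -/
import Mathlib

section
/- Let a > b > 0 with √a - √b > √2, β > β* (where β* is the smaller root of g(β) = (b·e^{2β} + a·e^{-2β})/2 - (a+b)/2 + 1 = 0), and define f_β and g̃ as before. Then f_β(t) ≤ g̃(β) < 0 for all t ≤ 0. -/
/-!
Put `s = √(t² + ab) + t`. For `P, Q > 0` with `PQ = ab`, writing `s = P eˣ` gives `ab / s = Q e⁻ˣ`
and `√(t² + ab) - t log (s / P) = (P eˣ (1 - x) + Q e⁻ˣ (1 + x)) / 2 ≤ (P + Q) / 2`, since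
`eʸ (1 - y) ≤ 1`. With `P = b e^{2β}`, `Q = a e^{-2β}` this is `f_β ≤ g(β)` on all of `ℝ`.
For `β ≥ log (a/b) / 4` and `t ≤ 0` take `P = Q = √(ab)` instead: the leftover term
`t (log b + 2β - log √(ab))` is then `≤ 0`, so `f_β(t) ≤ √(ab) - (a + b)/2 + 1`, which is negative
because `(√a - √b)² > 2`. Below that threshold `g` is strictly decreasing, so `g(β) < g(β*) = 0`.
-/

open Real Set

lemma mul_exp_mul_one_sub_add_le {P Q : ℝ} (hP : 0 ≤ P) (hQ : 0 ≤ Q) (x : ℝ) :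
    P * exp x * (1 - x) + Q * exp (-x) * (1 + x) ≤ P + Q := by
  have hx : exp x * (1 - x) ≤ 1 := by
    calc exp x * (1 - x) ≤ exp x * exp (-x) := by gcongr; exact one_sub_le_exp_neg x
      _ = 1 := by rw [← exp_add, add_neg_cancel, exp_zero]
  have hnx : exp (-x) * (1 + x) ≤ 1 := by
    calc exp (-x) * (1 + x) ≤ exp (-x) * exp x := by gcongr; linarith [add_one_le_exp x]
      _ = 1 := by rw [← exp_add, neg_add_cancel, exp_zero]
  nlinarith [mul_le_mul_of_nonneg_left hx hP, mul_le_mul_of_nonneg_left hnx hQ]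

lemma sqrt_sq_add_add_pos {c : ℝ} (hc : 0 < c) (t : ℝ) : 0 < √(t ^ 2 + c) + t := by
  have h : |t| < √(t ^ 2 + c) := by
    rw [← sqrt_sq_eq_abs]; exact sqrt_lt_sqrt (sq_nonneg t) (by linarith)
  linarith [neg_abs_le t]

lemma sqrt_sub_mul_log_le {P Q : ℝ} (hP : 0 < P) (hQ : 0 < Q) (t : ℝ) :
    √(t ^ 2 + P * Q) - t * (log (√(t ^ 2 + P * Q) + t) - log P) ≤ (P + Q) / 2 := by
  set R := √(t ^ 2 + P * Q)
  have hR : R ^ 2 = t ^ 2 + P * Q := sq_sqrt (by positivity)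
  have hs : 0 < R + t := sqrt_sq_add_add_pos (mul_pos hP hQ) t
  set x := log (R + t) - log P
  have hPx : P * exp x = R + t := by
    rw [exp_sub, exp_log hs, exp_log hP]; field_simp
  have hQx : Q * exp (-x) = R - t := by
    rw [exp_neg, ← div_eq_mul_inv, div_eq_iff (exp_pos x).ne']
    apply mul_left_cancel₀ hP.ne'
    linear_combination -hR - (R - t) * hPx
  have key := mul_exp_mul_one_sub_add_le hP.le hQ.le x
  rw [hPx, hQx] at key
  linarith

section

variable {a b : ℝ}

lemma sqrt_sub_mul_log_add_le (ha : 0 < a) (hb : 0 < b) (β t : ℝ) :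
    √(t ^ 2 + a * b) - t * (log (√(t ^ 2 + a * b) + t) - log b) + 2 * β * t
      ≤ (b * exp (2 * β) + a * exp (-2 * β)) / 2 := by
  have hPQ : b * exp (2 * β) * (a * exp (-2 * β)) = a * b := by
    rw [mul_mul_mul_comm, ← exp_add]; simp [mul_comm]
  have hlogP : log (b * exp (2 * β)) = log b + 2 * β := by
    rw [log_mul hb.ne' (exp_pos _).ne', log_exp]
  have key := sqrt_sub_mul_log_le (mul_pos hb (exp_pos (2 * β)))
    (mul_pos ha (exp_pos (-2 * β))) t
  rw [hPQ, hlogP] at key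
  linarith

lemma sqrt_sub_mul_log_add_le_sqrt_mul (ha : 0 < a) (hb : 0 < b) {β t : ℝ}
    (hβ : (1 / 4) * log (a / b) ≤ β) (ht : t ≤ 0) :
    √(t ^ 2 + a * b) - t * (log (√(t ^ 2 + a * b) + t) - log b) + 2 * β * t ≤ √(a * b) := by
  have hm : 0 < √(a * b) := sqrt_pos.2 (mul_pos ha hb)
  have key := sqrt_sub_mul_log_le hm hm t
  rw [mul_self_sqrt (mul_pos ha hb).le] at key
  have hlogm : log √(a * b) = (log a + log b) / 2 := by
    rw [log_sqrt (mul_pos ha hb).le, log_mul ha.ne' hb.ne']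
  rw [log_div ha.ne' hb.ne'] at hβ
  have hshift : 0 ≤ log b + 2 * β - log √(a * b) := by rw [hlogm]; linarith
  nlinarith [mul_nonpos_of_nonpos_of_nonneg ht hshift]

lemma strictAntiOn_mul_exp_add_mul_exp (ha : 0 < a) (hb : 0 < b) :
    StrictAntiOn (fun β => b * exp (2 * β) + a * exp (-2 * β)) (Iic ((1 / 4) * log (a / b))) := by
  have hderiv : ∀ β : ℝ, HasDerivAt (fun β => b * exp (2 * β) + a * exp (-2 * β))
      (2 * (b * exp (2 * β) - a * exp (-2 * β))) β := fun β =>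
    ((((hasDerivAt_id β).const_mul 2).exp.const_mul b).add
      (((hasDerivAt_id β).const_mul (-2)).exp.const_mul a)).congr_deriv (by simp only [id]; ring)
  refine strictAntiOn_of_deriv_neg (convex_Iic _)
    (fun β _ => (hderiv β).continuousAt.continuousWithinAt) fun β hβ => ?_
  rw [interior_Iic, mem_Iio] at hβ
  rw [(hderiv β).deriv]
  have h4β : exp (4 * β) < a / b := by
    rw [← exp_log (div_pos ha hb)]; exact exp_lt_exp.2 (by linarith)
  have hsplit : exp (2 * β) = exp (4 * β) * exp (-2 * β) := by rw [← exp_add]; ring_nf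
  rw [lt_div_iff₀ hb] at h4β
  nlinarith [exp_pos (-2 * β)]

lemma sqrt_mul_sub_half_add_add_one_neg (hb : 0 ≤ b) (hsep : √2 < √a - √b) :
    √(a * b) - (a + b) / 2 + 1 < 0 := by
  have ha : 0 ≤ a := by
    by_contra h
    rw [sqrt_eq_zero'.2 (not_le.1 h).le] at hsep
    linarith [sqrt_nonneg 2, sqrt_nonneg b]
  have h2 : (√2) ^ 2 < (√a - √b) ^ 2 := by gcongr
  rw [sqrt_mul ha, sq_sqrt zero_le_two] at *
  nlinarith [sq_sqrt ha, sq_sqrt hb]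

end

theorem stmt9_general (a b β : ℝ) (hb : 0 < b)
    (hsep : Real.sqrt 2 < Real.sqrt a - Real.sqrt b)
    (g : ℝ → ℝ)
    (hg : ∀ β', g β' = (b * Real.exp (2 * β') + a * Real.exp (-2 * β')) / 2
      - (a + b) / 2 + 1)
    (βstar : ℝ) (hroot : g βstar = 0)
    (hβ : βstar < β) :
    let f : ℝ → ℝ := fun t => Real.sqrt (t ^ 2 + a * b)
      - t * (Real.log (Real.sqrt (t ^ 2 + a * b) + t) - Real.log b)
      - (a + b) / 2 + 1 + 2 * β * t
    let gt : ℝ → ℝ := fun β' => if β' < (1 / 4) * Real.log (a / b) then g β'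
      else Real.sqrt (a * b) - (a + b) / 2 + 1
    ∀ t : ℝ, t ≤ 0 → f t ≤ gt β ∧ gt β < 0 := by
  intro f gt t ht
  have ha : 0 < a := sqrt_pos.1 (by linarith [sqrt_nonneg 2, sqrt_nonneg b])
  by_cases hβ₀ : β < (1 / 4) * log (a / b)
  · simp only [gt, f, if_pos hβ₀]
    refine ⟨?_, ?_⟩
    · linarith [hg β, sqrt_sub_mul_log_add_le ha hb β t]
    · have hanti := strictAntiOn_mul_exp_add_mul_exp ha hb
        (mem_Iic.2 (hβ.trans hβ₀).le) (mem_Iic.2 hβ₀.le) hβ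
      linarith [hg β, hg βstar]
  · simp only [gt, f, if_neg hβ₀]
    exact ⟨by linarith [sqrt_sub_mul_log_add_le_sqrt_mul ha hb (not_lt.1 hβ₀) ht],
      sqrt_mul_sub_half_add_add_one_neg hb.le hsep⟩

/-- If `√a - √b > √2` and `β > β*` (the smaller root of `g`),
then `f_β(t) ≤ g̃(β) < 0` for all `t ≤ 0`. -/
theorem stmt9 (a b β : ℝ) (hb : 0 < b) (hab : b < a)
    (hsep : Real.sqrt 2 < Real.sqrt a - Real.sqrt b)
    (g : ℝ → ℝ)
    (hg : ∀ β', g β' = (b * Real.exp (2 * β') + a * Real.exp (-2 * β')) / 2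
      - (a + b) / 2 + 1)
    (βstar : ℝ) (hroot : g βstar = 0) (hsmall : ∀ β', g β' = 0 → βstar ≤ β')
    (hβ : βstar < β) :
    let f : ℝ → ℝ := fun t => Real.sqrt (t ^ 2 + a * b)
      - t * (Real.log (Real.sqrt (t ^ 2 + a * b) + t) - Real.log b)
      - (a + b) / 2 + 1 + 2 * β * t
    let gt : ℝ → ℝ := fun β' => if β' < (1 / 4) * Real.log (a / b) then g β'
      else Real.sqrt (a * b) - (a + b) / 2 + 1
    ∀ t : ℝ, t ≤ 0 → f t ≤ gt β ∧ gt β < 0 :=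
  stmt9_general a b β hb hsep g hg βstar hroot hβ
end

section
/- Let A ~ Binomial(n/2 - 1, a·log(n)/n) and B ~ Binomial(n/2, b·log(n)/n) be independent, where a > b > 0. Then for every t ∈ [(b-a)/2, 0], P(B - A ≥ t·log(n)) ≤ exp(log(n)·(√(t² + ab) - t·(log(√(t² + ab) + t) - log(b)) - (a+b)/2 + O(log(n)/n))). -/
/-!
Chernoff bound: for `s ≥ 0`, `1{θ ≤ B - A} ≤ exp (s (B - A - θ))`, so by independence the
probability is at most `E[e^{-sA}] E[e^{sB}] e^{-sθ}`. Bounding each binomial moment generating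
function by `(1 + p (e^x - 1))^N ≤ exp (N p (e^x - 1))` and choosing the optimal tilt
`e^s = (√(t² + ab) + t) / b` turns the exponent into the claimed rate; the one missing trial of
`A` costs at most `a log n / n`.
-/

open Finset

/-- Probability mass function of the binomial distribution with `N` trials and
success probability `p`, evaluated at `k`. -/
noncomputable def binomPMF (N : ℕ) (p : ℝ) (k : ℕ) : ℝ :=
  (N.choose k : ℝ) * p ^ k * (1 - p) ^ (N - k)

open Real

lemma binomPMF_nonneg {N k : ℕ} {p : ℝ} (hp₀ : 0 ≤ p) (hp₁ : p ≤ 1) :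
    0 ≤ binomPMF N p k := by
  have : 0 ≤ 1 - p := sub_nonneg.mpr hp₁
  unfold binomPMF
  positivity

lemma sum_binomPMF_mul_exp (N : ℕ) (p s : ℝ) :
    ∑ k ∈ range (N + 1), binomPMF N p k * exp (s * k) = (p * exp s + (1 - p)) ^ N := by
  rw [add_pow]
  refine sum_congr rfl fun k _ => ?_
  rw [binomPMF, mul_pow, ← exp_nat_mul, mul_comm (k : ℝ) s]
  ring

lemma sum_binomPMF_mul_exp_le {p : ℝ} (hp₀ : 0 ≤ p) (hp₁ : p ≤ 1) (N : ℕ) (s : ℝ) :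
    ∑ k ∈ range (N + 1), binomPMF N p k * exp (s * k) ≤ exp (N * p * (exp s - 1)) := by
  have hbase : p * exp s + (1 - p) = p * (exp s - 1) + 1 := by ring
  rw [sum_binomPMF_mul_exp, hbase, mul_assoc, exp_nat_mul]
  exact pow_le_pow_left₀ (by nlinarith [exp_pos s]) (add_one_le_exp _) N

/-- The double sum is `P(B - A ≥ θ)` for independent `A ~ Bin(N, p)` and `B ~ Bin(M, q)`. -/
lemma sum_ite_le_sub_binomPMF_le_exp {p q : ℝ} (hp₀ : 0 ≤ p) (hp₁ : p ≤ 1) (hq₀ : 0 ≤ q)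
    (hq₁ : q ≤ 1) (N M : ℕ) {s : ℝ} (hs : 0 ≤ s) (θ : ℝ) :
    (∑ k ∈ range (N + 1), ∑ l ∈ range (M + 1),
        if θ ≤ (l : ℝ) - k then binomPMF N p k * binomPMF M q l else 0)
      ≤ exp (N * p * (exp (-s) - 1) + M * q * (exp s - 1) - s * θ) := by
  have hterm : ∀ k l : ℕ, (if θ ≤ (l : ℝ) - k then binomPMF N p k * binomPMF M q l else 0)
      ≤ binomPMF N p k * exp (-s * k) * (binomPMF M q l * exp (s * l)) * exp (-(s * θ)) := by
    intro k l
    have hA := binomPMF_nonneg (N := N) (k := k) hp₀ hp₁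
    have hB := binomPMF_nonneg (N := M) (k := l) hq₀ hq₁
    have hsplit : binomPMF N p k * exp (-s * k) * (binomPMF M q l * exp (s * l)) * exp (-(s * θ))
        = binomPMF N p k * binomPMF M q l * exp (s * ((l : ℝ) - k - θ)) := by
      rw [mul_sub, mul_sub, sub_eq_add_neg, sub_eq_add_neg, exp_add, exp_add]
      ring_nf
    rw [hsplit]
    split_ifs with hθ
    · exact le_mul_of_one_le_right (mul_nonneg hA hB)
        (one_le_exp (mul_nonneg hs (by linarith)))
    · positivity
  calc _ ≤ ∑ k ∈ range (N + 1), ∑ l ∈ range (M + 1),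
          binomPMF N p k * exp (-s * k) * (binomPMF M q l * exp (s * l)) * exp (-(s * θ)) :=
        sum_le_sum fun k _ => sum_le_sum fun l _ => hterm k l
    _ = (∑ k ∈ range (N + 1), binomPMF N p k * exp (-s * k)) *
          (∑ l ∈ range (M + 1), binomPMF M q l * exp (s * l)) * exp (-(s * θ)) := by
        rw [sum_mul_sum, sum_mul]
        simp_rw [sum_mul]
    _ ≤ exp (N * p * (exp (-s) - 1)) * exp (M * q * (exp s - 1)) * exp (-(s * θ)) := by
        gcongr
        · exact sum_nonneg fun l _ => mul_nonneg (binomPMF_nonneg hq₀ hq₁) (exp_nonneg _)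
        · exact sum_binomPMF_mul_exp_le hp₀ hp₁ N (-s)
        · exact sum_binomPMF_mul_exp_le hq₀ hq₁ M s
    _ = _ := by rw [← exp_add, ← exp_add, sub_eq_add_neg _ (s * θ)]

lemma le_sqrt_sq_add_mul_add {a b t : ℝ} (hb : 0 < b) (ht : (b - a) / 2 ≤ t) :
    b ≤ √(t ^ 2 + a * b) + t := by
  rcases le_total b t with hbt | htb
  · linarith [sqrt_nonneg (t ^ 2 + a * b)]
  · have : (b - t) ^ 2 ≤ t ^ 2 + a * b := by nlinarith
    linarith [le_sqrt_of_sq_le this]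

lemma half_mul_exp_neg_add_half_mul_exp_eq_sqrt {a b : ℝ} (ha : 0 < a) (hb : 0 < b) (t : ℝ) :
    a / 2 * exp (-(log (√(t ^ 2 + a * b) + t) - log b))
      + b / 2 * exp (log (√(t ^ 2 + a * b) + t) - log b) = √(t ^ 2 + a * b) := by
  set r := √(t ^ 2 + a * b)
  have hr : r ^ 2 = t ^ 2 + a * b := sq_sqrt (by nlinarith [mul_pos ha hb])
  have hrt : 0 < r + t := by nlinarith [sqrt_nonneg (t ^ 2 + a * b), mul_pos ha hb]
  rw [exp_neg, exp_sub, exp_log hrt, exp_log hb]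
  field_simp
  linear_combination -hr

lemma sum_ite_le_sub_binomPMF_le_exp_sqrt {a b : ℝ} (ha : 0 < a) (hb : 0 < b) {t : ℝ}
    (ht : (b - a) / 2 ≤ t) {L p q : ℝ} (hp₀ : 0 ≤ p) (hp₁ : p ≤ 1) (hq₀ : 0 ≤ q) (hq₁ : q ≤ 1)
    (k : ℕ) (hmp : (k + 1) * p = a * L / 2) (hmq : (k + 1) * q = b * L / 2) :
    (∑ i ∈ range (k + 1), ∑ j ∈ range (k + 1 + 1),
        if t * L ≤ (j : ℝ) - i then binomPMF k p i * binomPMF (k + 1) q j else 0)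
      ≤ exp (L * (√(t ^ 2 + a * b) - t * (log (√(t ^ 2 + a * b) + t) - log b) - (a + b) / 2)
          + p) := by
  set r := √(t ^ 2 + a * b)
  set s := log (r + t) - log b
  have hs : 0 ≤ s := sub_nonneg.2 (log_le_log hb (le_sqrt_sq_add_mul_add hb ht))
  have hkey : L * (a / 2 * exp (-s) + b / 2 * exp s) = L * r :=
    congrArg (L * ·) (half_mul_exp_neg_add_half_mul_exp_eq_sqrt ha hb t)
  have hA : (k + 1) * p * (exp (-s) - 1) = a * L / 2 * (exp (-s) - 1) := by rw [hmp]
  have hB : (k + 1) * q * (exp s - 1) = b * L / 2 * (exp s - 1) := by rw [hmq]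
  have hF : p * (1 - exp (-s)) ≤ p := by
    nlinarith [exp_pos (-s), exp_le_one_iff.2 (neg_nonpos.2 hs)]
  refine (sum_ite_le_sub_binomPMF_le_exp hp₀ hp₁ hq₀ hq₁ k (k + 1) hs (t * L)).trans ?_
  refine exp_le_exp.2 ?_
  push_cast
  linarith

lemma eventually_one_le_log_and_mul_log_div_le_one (a : ℝ) :
    ∀ᶠ n : ℕ in Filter.atTop, 1 ≤ log n ∧ a * log n / n ≤ 1 := by
  have hlog := (tendsto_log_atTop.comp tendsto_natCast_atTop_atTop).eventually_ge_atTop 1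
  have hratio : Filter.Tendsto (fun n : ℕ => a * log n / n) Filter.atTop (nhds 0) := by
    simpa [mul_div_assoc] using (isLittleO_log_id_atTop.tendsto_div_nhds_zero.comp
      tendsto_natCast_atTop_atTop).const_mul a
  exact hlog.and (hratio.eventually (eventually_le_nhds one_pos))

/-- For independent `A ~ Binom(n/2 - 1, a log n / n)` and
`B ~ Binom(n/2, b log n / n)` with `a > b > 0`, for every `t ∈ [(b-a)/2, 0]`,
`P(B - A ≥ t log n) ≤ exp(log n (√(t²+ab) - t(log(√(t²+ab)+t) - log b)
- (a+b)/2 + O(log n / n)))`. -/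
theorem stmt14 (a b : ℝ) (hb : 0 < b) (hab : b < a) :
    ∃ C : ℝ, 0 < C ∧ ∃ N0 : ℕ, ∀ n : ℕ, Even n → N0 ≤ n →
      ∀ t : ℝ, (b - a) / 2 ≤ t → t ≤ 0 →
        (∑ k ∈ Finset.range (n / 2), ∑ l ∈ Finset.range (n / 2 + 1),
            if t * Real.log n ≤ (l : ℝ) - (k : ℝ) then
              binomPMF (n / 2 - 1) (a * Real.log n / n) k *
                binomPMF (n / 2) (b * Real.log n / n) l
            else 0)
          ≤ Real.exp (Real.log n *
              (Real.sqrt (t ^ 2 + a * b)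
                - t * (Real.log (Real.sqrt (t ^ 2 + a * b) + t) - Real.log b)
                - (a + b) / 2 + C * Real.log n / n)) := by
  have ha : 0 < a := hb.trans hab
  refine ⟨a, ha, ?_⟩
  obtain ⟨N0, hN0⟩ := Filter.eventually_atTop.mp (eventually_one_le_log_and_mul_log_div_le_one a)
  refine ⟨N0, fun n ⟨m, hnm⟩ hn t ht _ => ?_⟩
  obtain ⟨hL, hp₁⟩ := hN0 n hn
  have hn0 : n ≠ 0 := by rintro rfl; norm_num at hL
  obtain ⟨k, rfl⟩ : ∃ k, m = k + 1 := ⟨m - 1, by omega⟩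
  rw [show n / 2 = k + 1 by omega, Nat.add_sub_cancel]
  have hcast : (n : ℝ) = 2 * (k + 1) := by rw [hnm]; push_cast; ring
  have hmp : (k + 1 : ℝ) * (a * log n / n) = a * log n / 2 := by rw [hcast]; field_simp
  have hmq : (k + 1 : ℝ) * (b * log n / n) = b * log n / 2 := by rw [hcast]; field_simp
  have hp₀ : 0 ≤ a * log n / n := by positivity
  have hqp : b * log n / n ≤ a * log n / n := by gcongr
  calc _ ≤ _ := sum_ite_le_sub_binomPMF_le_exp_sqrt ha hb ht hp₀ hp₁ (by positivity)
        (hqp.trans hp₁) k hmp hmq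
    _ ≤ _ := by
      rw [exp_le_exp, mul_add (log n)]
      linarith [le_mul_of_one_le_left hp₀ hL]
end
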